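/- For every n ≥ 1, the sum of squares ∑_{s ∈ E_n} (D_n^{(s)})^2 equals the Catalan number C_n = (1/(n+1)) · binom(2n, n), where E_n = {s : 0 ≤ s ≤ n, s ≡ n (mod 2)} and D_n^{(s)} = (2(s+1)/(n+s+2)) · binom(n, (n+s)/2). -/

import Mathlib

open scoped BigOperators

/-- `D n s = (2(s+1)/(n+s+2)) · binom(n, (n+s)/2)`, the number of `(n,s)`-link patterns. -/
noncomputable def Dlp (n s : ℕ) : ℚ :=
  (2 * (s + 1) : ℚ) / (n + s + 2) * (n.choose ((n + s) / 2))

/-!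
With `n + s = 2k`, `D n s` is the ballot number `binom(n, k) - binom(n, k+1)`, which counts
walks of `n` steps `±1` from height `0` to height `s` that never go negative. These counts obey
`ballot (n+1) = pathStep (ballot n)`, and `pathStep` is symmetric for the pairing
`⟨f, g⟩ = ∑ₛ f s * g s`. Hence `∑ₛ (ballot n s)² = ⟨pathStepⁿ δ₀, pathStepⁿ δ₀⟩ = (pathStep²ⁿ δ₀) 0
= ballot (2n) 0 = binom(2n, n) - binom(2n, n+1)`, the Catalan number.
-/

def pathStep {R : Type*} [Add R] (f : ℕ → R) : ℕ → R
  | 0 => f 1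
  | s + 1 => f s + f (s + 2)

theorem sum_range_pathStep_mul_sub_sum_range_mul_pathStep {R : Type*} [CommRing R]
    (f g : ℕ → R) (K : ℕ) :
    ∑ s ∈ Finset.range (K + 1), pathStep f s * g s
      - ∑ s ∈ Finset.range (K + 1), f s * pathStep g s
      = f (K + 1) * g K - f K * g (K + 1) := by
  rw [Finset.sum_range_succ', Finset.sum_range_succ', add_sub_add_comm, ← Finset.sum_sub_distrib]
  set t : ℕ → R := fun s => f (s + 1) * g s - f s * g (s + 1)
  have step_eq (s : ℕ) :
      pathStep f (s + 1) * g (s + 1) - f (s + 1) * pathStep g (s + 1) = t (s + 1) - t s := by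
    simp only [pathStep, t]; ring
  rw [Finset.sum_congr rfl fun s _ => step_eq s, Finset.sum_range_sub]
  simp only [pathStep, t]
  ring

noncomputable def ballot (n s : ℕ) : ℚ :=
  if s % 2 = n % 2 then (n.choose ((n + s) / 2) : ℚ) - n.choose ((n + s) / 2 + 1) else 0

theorem ballot_eq_zero_of_lt {n s : ℕ} (h : n < s) : ballot n s = 0 := by
  unfold ballot
  split_ifs
  · rw [Nat.choose_eq_zero_of_lt (by omega), Nat.choose_eq_zero_of_lt (by omega), Nat.cast_zero,
      sub_zero]
  · rfl

theorem ballot_zero_left (s : ℕ) : ballot 0 s = if s = 0 then 1 else 0 := by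
  rcases Nat.eq_zero_or_pos s with rfl | hs
  · simp [ballot]
  · rw [ballot_eq_zero_of_lt hs, if_neg hs.ne']

theorem ballot_succ_zero (n : ℕ) : ballot (n + 1) 0 = ballot n 1 := by
  unfold ballot
  split_ifs <;> try omega
  · obtain ⟨k, rfl⟩ : ∃ k, n = 2 * k + 1 := ⟨n / 2, by omega⟩
    have hsymm : (2 * k + 1).choose k = (2 * k + 1).choose (k + 1) :=
      Nat.choose_symm_of_eq_add (by ring)
    simp only [show (2 * k + 1 + 1 + 0) / 2 = k + 1 by omega, Nat.choose_succ_succ, hsymm]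
    push_cast
    ring
  · rfl

theorem ballot_succ_succ (n s : ℕ) : ballot (n + 1) (s + 1) = ballot n s + ballot n (s + 2) := by
  unfold ballot
  split_ifs <;> try omega
  · obtain ⟨k, hk⟩ : ∃ k, n + s = 2 * k := ⟨(n + s) / 2, by omega⟩
    simp only [show (n + 1 + (s + 1)) / 2 = k + 1 by omega, show (n + s) / 2 = k by omega,
      show (n + (s + 2)) / 2 = k + 1 by omega, Nat.choose_succ_succ]
    push_cast
    ring
  · ring

theorem ballot_succ (n : ℕ) : ballot (n + 1) = pathStep (ballot n) := by
  funext s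
  cases s with
  | zero => exact ballot_succ_zero n
  | succ s => exact ballot_succ_succ n s

theorem sum_range_ballot_mul_ballot (m : ℕ) {n K : ℕ} (hn : n ≤ K) :
    ∑ s ∈ Finset.range (K + 1), ballot m s * ballot n s = ballot (m + n) 0 := by
  induction n generalizing m with
  | zero => simp [ballot_zero_left]
  | succ n ih =>
    have hsymm := sum_range_pathStep_mul_sub_sum_range_mul_pathStep (ballot m) (ballot n) K
    rw [ballot_eq_zero_of_lt (show n < K by omega), ballot_eq_zero_of_lt (show n < K + 1 by omega),
      mul_zero, mul_zero, sub_zero, sub_eq_zero, ← ballot_succ, ← ballot_succ,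
      ih (m + 1) (by omega)] at hsymm
    rw [show m + (n + 1) = m + 1 + n by omega, hsymm]

theorem cast_choose_succ_mul {R : Type*} [CommRing R] (n k : ℕ) :
    (n.choose (k + 1) : R) * (k + 1) = n.choose k * (n - k) := by
  rcases le_or_gt k n with hk | hk
  · simpa [Nat.cast_sub hk] using congrArg (Nat.cast (R := R)) (Nat.choose_succ_right_eq n k)
  · simp [Nat.choose_eq_zero_of_lt hk, Nat.choose_eq_zero_of_lt (hk.trans k.lt_succ_self)]

theorem Dlp_eq_ballot {n s : ℕ} (hparity : s % 2 = n % 2) : Dlp n s = ballot n s := by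
  obtain ⟨k, hk⟩ : ∃ k, n + s = 2 * k := ⟨(n + s) / 2, by omega⟩
  have hs : (s : ℚ) = 2 * k - n := by
    have := congrArg (Nat.cast (R := ℚ)) hk
    push_cast at this
    linarith
  rw [Dlp, ballot, if_pos hparity, show (n + s) / 2 = k by omega, hs]
  have hden : (n : ℚ) + (2 * k - n) + 2 ≠ 0 := by ring_nf; positivity
  field_simp
  linear_combination 2 * cast_choose_succ_mul (R := ℚ) n k

theorem ballot_add_self_zero (n : ℕ) : ballot (n + n) 0 = catalan n := by
  have hcatalan : ((n + 1) * catalan n : ℚ) = (n + n).choose n := by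
    rw [← two_mul]
    exact_mod_cast succ_mul_catalan_eq_centralBinom n
  have hchoose := cast_choose_succ_mul (R := ℚ) (n + n) n
  rw [ballot, if_pos (by omega), show (n + n + 0) / 2 = n by omega]
  apply mul_left_cancel₀ (show (n : ℚ) + 1 ≠ 0 by positivity)
  push_cast at hchoose
  linear_combination -hchoose - hcatalan

theorem stmt3_general (n : ℕ) :
    ∑ s ∈ (Finset.range (n + 1)).filter (fun s => s % 2 = n % 2),
      (Dlp n s) ^ 2 = catalan n := by
  calc ∑ s ∈ (Finset.range (n + 1)).filter (fun s => s % 2 = n % 2), (Dlp n s) ^ 2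
      = ∑ s ∈ (Finset.range (n + 1)).filter (fun s => s % 2 = n % 2), ballot n s * ballot n s :=
        Finset.sum_congr rfl fun s hs => by
          rw [Dlp_eq_ballot (Finset.mem_filter.mp hs).2, sq]
    _ = ∑ s ∈ Finset.range (n + 1), ballot n s * ballot n s :=
        Finset.sum_filter_of_ne fun s _ hs => by
          by_contra hparity
          simp [ballot, hparity] at hs
    _ = catalan n := by rw [sum_range_ballot_mul_ballot n le_rfl, ballot_add_self_zero]

/-- For every `n ≥ 1`, `∑_{s ∈ E_n} (D_n^{(s)})² = C_n`, where
`E_n = {s : 0 ≤ s ≤ n, s ≡ n (mod 2)}` and `C_n = (1/(n+1))·binom(2n,n)`. -/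
theorem stmt3 (n : ℕ) (hn : 1 ≤ n) :
    ∑ s ∈ (Finset.range (n + 1)).filter (fun s => s % 2 = n % 2),
      (Dlp n s) ^ 2 = catalan n :=
  stmt3_general n
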